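/- For affine games G, H and an affine game J different from ∞ and ∞̄: if G ≥ H then G + J ≥ H + J. -/

import Mathlib

inductive AGame : Type
  | inf : AGame
  | binf : AGame
  | node : List AGame → List AGame → AGame

namespace AGame

/-- The affine games: option sets are nonempty (hereditarily). -/
inductive Valid : AGame → Prop
  | inf : Valid .inf
  | binf : Valid .binf
  | node : ∀ {L R : List AGame}, L ≠ [] → R ≠ [] →
      (∀ g ∈ L, Valid g) → (∀ g ∈ R, Valid g) → Valid (.node L R)

/-- Total version of the disjunctive sum (value on the undefined cases `∞ + ∞̄` is junk). -/
def add' : AGame → AGame → AGame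
  | .inf, _ => .inf
  | _, .inf => .inf
  | .binf, _ => .binf
  | _, .binf => .binf
  | .node L R, .node L' R' =>
      .node ((L.attach.map fun x => add' x.1 (.node L' R')) ++
             (L'.attach.map fun y => add' (.node L R) y.1))
            ((R.attach.map fun x => add' x.1 (.node L' R')) ++
             (R'.attach.map fun y => add' (.node L R) y.1))
termination_by G H => sizeOf G + sizeOf H
decreasing_by
  all_goals
    simp_wf
    first
      | (have := List.sizeOf_lt_of_mem x.2; simp_all; omega)
      | (have := List.sizeOf_lt_of_mem y.2; simp_all; omega)

/-- The disjunctive sum, undefined (`none`) exactly when adding `∞` to `∞̄`. -/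
def add : AGame → AGame → Option AGame
  | .inf, .binf => none
  | .binf, .inf => none
  | G, H => some (add' G H)

mutual
/-- `o^L(G) = L` : Left, playing first, wins `G`. -/
def lf : AGame → Bool
  | .inf => true
  | .binf => false
  | .node L _ => L.attach.any fun x => ls x.1
termination_by G => sizeOf G
decreasing_by
  simp_wf; have := List.sizeOf_lt_of_mem x.2; simp_all; omega
/-- `o^R(G) = L` : Left, playing second, wins `G`. -/
def ls : AGame → Bool
  | .inf => true
  | .binf => false
  | .node _ R => R.attach.all fun x => lf x.1
termination_by G => sizeOf G
decreasing_by
  simp_wf; have := List.sizeOf_lt_of_mem x.2; simp_all; omega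
end

/-- The combined outcome `(o^L(G), o^R(G))`, encoded as a pair of booleans
(`true` = Left wins). `(true,true)` is 𝓛, `(true,false)` is 𝓝, `(false,true)` is 𝓟,
`(false,false)` is 𝓡. -/
def outcome (G : AGame) : Bool × Bool := (lf G, ls G)

/-- The partial order of outcomes (componentwise, 𝓛 maximal, 𝓡 minimal, 𝓝 ∥ 𝓟). -/
def OutLE (a b : Bool × Bool) : Prop :=
  (a.1 = true → b.1 = true) ∧ (a.2 = true → b.2 = true)

/-- `G ≥ H` : replacing `H` by `G` never hurts Left in any disjunctive sum. -/
def GE (G H : AGame) : Prop :=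
  ∀ X : AGame, Valid X → X ≠ .inf → X ≠ .binf →
    OutLE (outcome (add' H X)) (outcome (add' G X))

/-- Game equivalence. -/
def Equiv (G H : AGame) : Prop :=
  ∀ X : AGame, Valid X → X ≠ .inf → X ≠ .binf →
    outcome (add' G X) = outcome (add' H X)

/-- The zero game `{∞̄ | ∞}`. -/
def zero : AGame := .node [.binf] [.inf]

/-- The conjugate (players switch roles). -/
def neg : AGame → AGame
  | .inf => .binf
  | .binf => .inf
  | .node L R =>
      .node (R.attach.map fun x => neg x.1) (L.attach.map fun x => neg x.1)
termination_by G => sizeOf G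
decreasing_by
  all_goals
    simp_wf
    (have := List.sizeOf_lt_of_mem x.2; simp_all; omega)


/-- Left option set (empty list for the terminating games). -/
def leftOptions : AGame → List AGame
  | .node L _ => L
  | _ => []

/-- Right option set (empty list for the terminating games). -/
def rightOptions : AGame → List AGame
  | .node _ R => R
  | _ => []

/-- A check: a game having `∞` as a Left option or `∞̄` as a Right option. -/
def IsCheck : AGame → Prop
  | .node L R => .inf ∈ L ∨ .binf ∈ R
  | _ => False

/-- `Follower H G` : `H` is a follower of `G` (i.e. `G` itself, an option of `G`,
an option of an option, and so on). -/
inductive Follower : AGame → AGame → Prop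
  | refl (G : AGame) : Follower G G
  | left {H K : AGame} {L R : List AGame} : K ∈ L → Follower H K → Follower H (.node L R)
  | right {H K : AGame} {L R : List AGame} : K ∈ R → Follower H K → Follower H (.node L R)

/-- A Conway form: distinct from `∞` and `∞̄`, with no checks among its followers. -/
def ConwayForm (G : AGame) : Prop :=
  G ≠ .inf ∧ G ≠ .binf ∧ ∀ H, Follower H G → ¬ IsCheck H

/-- A Conway game: a game equivalent to some Conway form. -/
def ConwayGame (G : AGame) : Prop :=
  ∃ G', Valid G' ∧ ConwayForm G' ∧ Equiv G G'

/-- `J` is invertible: `J + K = 0` (in the sense of game equivalence) for some affine `K`. -/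
def Invertible (J : AGame) : Prop :=
  ∃ K, Valid K ∧ ∃ S, add J K = some S ∧ Equiv S zero

/-- Number forms: the images of the surreal-number Conway forms under the embedding
that replaces an empty option set by `{∞̄}` on the Left and by `{∞}` on the Right.
Every genuine Left option is strictly less than every genuine Right option, and
all genuine options are again number forms. -/
inductive NumForm : AGame → Prop
  | mk {L R : List AGame}
      (hL0 : L ≠ []) (hR0 : R ≠ [])
      (hLb : .binf ∈ L → L = [.binf]) (hRi : .inf ∈ R → R = [.inf])
      (hLnum : ∀ x ∈ L, x ≠ .binf → NumForm x)
      (hRnum : ∀ y ∈ R, y ≠ .inf → NumForm y)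
      (hlt : ∀ x ∈ L, ∀ y ∈ R, x ≠ .binf → y ≠ .inf → GE y x ∧ ¬ GE x y) :
      NumForm (.node L R)

/-- A number: an affine game equal to (the image of) a Conway number form. -/
def IsNumber (G : AGame) : Prop := ∃ n, Valid n ∧ NumForm n ∧ Equiv G n

/-- The pathetic tiny `⧾∞ = {0 | {0 | ∞̄}}`. -/
def tinyInf : AGame := .node [zero] [.node [zero] [.binf]]

/-- The pathetic miny `⧿∞ = {{∞ | 0} | 0}`. -/
def minyInf : AGame := .node [.node [.inf] [zero]] [zero]

end AGame

/-! `(G + J) + X = G + (J + X)`, and `J + X` is again an affine game other than `∞` and `∞̄`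
because neither `J` nor `X` is infinite; so every test of `G + J` against `H + J` is a test of
`G` against `H`. -/

namespace AGame

@[simp]
theorem add'_inf_left (H : AGame) : add' .inf H = .inf := by
  rw [add']

@[simp]
theorem add'_inf_right (G : AGame) : add' G .inf = .inf := by
  cases G <;> simp [add']

theorem add'_binf_left {H : AGame} (hH : H ≠ .inf) : add' .binf H = .binf := by
  cases H <;> simp_all [add']

theorem add'_binf_right {G : AGame} (hG : G ≠ .inf) : add' G .binf = .binf := by
  cases G <;> simp_all [add']

theorem add'_node_node (L R L' R' : List AGame) :
    add' (.node L R) (.node L' R') =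
      .node (L.map (add' · (.node L' R')) ++ L'.map (add' (.node L R) ·))
        (R.map (add' · (.node L' R')) ++ R'.map (add' (.node L R) ·)) := by
  rw [add']
  simp

theorem add'_eq_node {G H : AGame} {L R L' R' : List AGame} (hG : G = .node L R)
    (hH : H = .node L' R') :
    add' G H = .node (L.map (add' · H) ++ L'.map (add' G ·))
      (R.map (add' · H) ++ R'.map (add' G ·)) := by
  subst hG hH
  exact add'_node_node L R L' R'

theorem exists_eq_node {G : AGame} (h₁ : G ≠ .inf) (h₂ : G ≠ .binf) :
    ∃ L R, G = .node L R := by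
  cases G with
  | inf => contradiction
  | binf => contradiction
  | node L R => exact ⟨L, R, rfl⟩

theorem add'_eq_inf_iff {G H : AGame} : add' G H = .inf ↔ G = .inf ∨ H = .inf := by
  match G, H with
  | .inf, _ | _, .inf => simp
  | .binf, .binf => simp [add'_binf_left]
  | .binf, .node _ _ => simp [add'_binf_left]
  | .node _ _, .binf => simp [add'_binf_right]
  | .node _ _, .node _ _ => simp [add'_node_node]

theorem add'_eq_binf_iff {G H : AGame} :
    add' G H = .binf ↔ (G = .binf ∨ H = .binf) ∧ G ≠ .inf ∧ H ≠ .inf := by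
  match G, H with
  | .inf, _ | _, .inf => simp
  | .binf, .binf => simp [add'_binf_left]
  | .binf, .node _ _ => simp [add'_binf_left]
  | .node _ _, .binf => simp [add'_binf_right]
  | .node _ _, .node _ _ => simp [add'_node_node]

theorem Valid.add' {G H : AGame} (hG : Valid G) (hH : Valid H) : Valid (add' G H) := by
  induction hG generalizing H with
  | inf => simpa using Valid.inf
  | binf =>
    by_cases h : H = .inf
    · simpa [h] using Valid.inf
    · simpa [add'_binf_left h] using Valid.binf
  | node hL hR _ _ ihL ihR =>
    induction hH with
    | inf => simpa using Valid.inf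
    | binf => simpa [add'_binf_right] using Valid.binf
    | node hL' hR' hLv' hRv' ihL' ihR' =>
      have hH := Valid.node hL' hR' hLv' hRv'
      rw [add'_node_node]
      refine .node (by simp [hL]) (by simp [hR]) ?_ ?_ <;>
        simp only [List.forall_mem_append, List.forall_mem_map]
      · exact ⟨fun g hg => ihL g hg hH, ihL'⟩
      · exact ⟨fun g hg => ihR g hg hH, ihR'⟩

theorem add'_assoc (A B C : AGame) : add' (add' A B) C = add' A (add' B C) := by
  by_cases hinf : A = .inf ∨ B = .inf ∨ C = .inf
  · have h₁ : add' (add' A B) C = .inf := by simp only [add'_eq_inf_iff]; tauto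
    have h₂ : add' A (add' B C) = .inf := by simp only [add'_eq_inf_iff]; tauto
    rw [h₁, h₂]
  by_cases hbinf : A = .binf ∨ B = .binf ∨ C = .binf
  · have h₁ : add' (add' A B) C = .binf := by
      simp only [add'_eq_binf_iff, ne_eq, add'_eq_inf_iff]; tauto
    have h₂ : add' A (add' B C) = .binf := by
      simp only [add'_eq_binf_iff, ne_eq, add'_eq_inf_iff]; tauto
    rw [h₁, h₂]
  push Not at hinf hbinf
  obtain ⟨La, Ra, hA⟩ := exists_eq_node hinf.1 hbinf.1
  obtain ⟨Lb, Rb, hB⟩ := exists_eq_node hinf.2.1 hbinf.2.1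
  obtain ⟨Lc, Rc, hC⟩ := exists_eq_node hinf.2.2 hbinf.2.2
  rw [add'_eq_node (add'_eq_node hA hB) hC, add'_eq_node hA (add'_eq_node hB hC)]
  simp only [List.map_append, List.map_map, List.append_assoc]
  congr 1 <;> refine congrArg₂ _ (List.map_congr_left fun a ha => ?_)
    (congrArg₂ _ (List.map_congr_left fun b hb => ?_) (List.map_congr_left fun c hc => ?_))
  all_goals first | exact add'_assoc a B C | exact add'_assoc A b C | exact add'_assoc A B c
termination_by sizeOf A + sizeOf B + sizeOf C
decreasing_by
  all_goals
    subst hA hB hC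
    first
      | have := List.sizeOf_lt_of_mem ha
      | have := List.sizeOf_lt_of_mem hb
      | have := List.sizeOf_lt_of_mem hc
    simp
    omega

/-- Order is compatible with adding a fixed non-infinite game. -/
theorem ge_add_right (G H J : AGame) (hG : Valid G) (hH : Valid H) (hJ : Valid J)
    (hJ1 : J ≠ .inf) (hJ2 : J ≠ .binf) (h : GE G H) :
    GE (add' G J) (add' H J) := by
  intro X hX hX₁ hX₂
  rw [add'_assoc, add'_assoc]
  exact h _ (hJ.add' hX) (by simp [add'_eq_inf_iff, hJ1, hX₁])
    (by simp [add'_eq_binf_iff, hJ2, hX₂])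

end AGame
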